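/- arXiv:1001.4706 — 3 statements merged into one kernel-verified Lean document; each statement's English description precedes it below -/
import Mathlib

section
/- Let $Z_1, \dots, Z_N$ be i.i.d. nonnegative random variables with $\mathbb{E} e^{a Z_1} < \infty$ for some $a > 0$, where $N = r^2$ and $r \geq 1$ is an integer. Set $b = 6/a$. If $r \geq \mathbb{E} e^{a Z_1} / \log 2$, then for all $x > 0$, $\mathbb{P}\left(\sum_{l=1}^{N} Z_l \mathbf{1}\{Z_l > b \log r\} > x\right) \leq 2 e^{-\frac{a}{2} x}$. -/
open MeasureTheory ProbabilityTheory Real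

/-! Chernoff bound at parameter `a / 2`. Above the threshold `c = (6 / a) log r` one has
`e^{(a/2) z} = e^{a z} e^{-(a/2) z} ≤ r⁻³ e^{a z}`, so each truncated summand has exponential
moment at most `1 + r⁻³ 𝔼 e^{a Z}`. By independence the moment of the sum is at most
`(1 + r⁻³ 𝔼 e^{a Z})^{r²} ≤ exp (𝔼 e^{a Z} / r) ≤ 2`. -/

section Truncation

variable {Ω : Type*} [MeasurableSpace Ω] {μ : Measure Ω} {X : Ω → ℝ} {s t c : ℝ}

lemma aemeasurable_of_integrable_exp_mul (ht : t ≠ 0)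
    (h : Integrable (fun ω => exp (t * X ω)) μ) : AEMeasurable X μ :=
  ((measurable_log.comp_aemeasurable h.aemeasurable).div_const t).congr <|
    .of_forall fun ω => by simp [ht]

lemma exp_mul_indicator_Ioi_le (hts : t ≤ s) (z : ℝ) :
    exp (t * (Set.Ioi c).indicator id z) ≤ 1 + exp (-(s - t) * c) * exp (s * z) := by
  by_cases hz : c < z
  · have : exp (t * z) ≤ exp (-(s - t) * c) * exp (s * z) := by
      rw [← exp_add]; gcongr; nlinarith
    simpa [hz] using this.trans (le_add_of_nonneg_left zero_le_one)
  · simp only [Set.indicator_of_notMem (Set.notMem_Ioi.2 (not_lt.1 hz)), mul_zero, exp_zero]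
    exact le_add_of_nonneg_right (by positivity)

lemma integrable_exp_mul_indicator_Ioi_comp [IsFiniteMeasure μ] (hX : AEMeasurable X μ)
    (hint : Integrable (fun ω => exp (s * X ω)) μ) (hts : t ≤ s) :
    Integrable (fun ω => exp (t * ((Set.Ioi c).indicator id ∘ X) ω)) μ :=
  ((integrable_const 1).add (hint.const_mul _)).mono'
    ((((measurable_id.indicator measurableSet_Ioi).comp_aemeasurable hX).const_mul t).exp
      |>.aestronglyMeasurable)
    (.of_forall fun ω => by
      rw [norm_of_nonneg (exp_nonneg _)]; exact exp_mul_indicator_Ioi_le hts (X ω))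

lemma mgf_indicator_Ioi_comp_le [IsProbabilityMeasure μ] (hX : AEMeasurable X μ)
    (hint : Integrable (fun ω => exp (s * X ω)) μ) (hts : t ≤ s) :
    mgf ((Set.Ioi c).indicator id ∘ X) μ t ≤ 1 + exp (-(s - t) * c) * mgf X μ s :=
  calc mgf ((Set.Ioi c).indicator id ∘ X) μ t
      ≤ ∫ ω, (1 + exp (-(s - t) * c) * exp (s * X ω)) ∂μ :=
        integral_mono (integrable_exp_mul_indicator_Ioi_comp hX hint hts)
          ((integrable_const 1).add (hint.const_mul _))
          fun ω => exp_mul_indicator_Ioi_le hts (X ω)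
    _ = 1 + exp (-(s - t) * c) * mgf X μ s := by
        rw [integral_add (integrable_const 1) (hint.const_mul _), integral_const_mul]
        simp [mgf]

end Truncation

namespace ProbabilityTheory

lemma identDistrib_of_map_eq {Ω Ω' : Type*} [MeasurableSpace Ω] [MeasurableSpace Ω']
    {μ : Measure Ω} {ν : Measure Ω'} [NeZero ν] {X : Ω → ℝ} {Y : Ω' → ℝ}
    (hY : AEMeasurable Y ν) (h : μ.map X = ν.map Y) : IdentDistrib X Y μ ν :=
  ⟨.of_map_ne_zero (by simp [h, hY, NeZero.ne]), hY, h⟩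

lemma IdentDistrib.mgf_eq {Ω Ω' : Type*} [MeasurableSpace Ω] [MeasurableSpace Ω']
    {μ : Measure Ω} {ν : Measure Ω'} {X : Ω → ℝ} {Y : Ω' → ℝ} (h : IdentDistrib X Y μ ν)
    (t : ℝ) : mgf X μ t = mgf Y ν t :=
  (h.comp (by fun_prop : Measurable fun z => exp (t * z))).integral_eq

variable {Ω ι : Type*} [MeasurableSpace Ω] {μ : Measure Ω} {X : ι → Ω → ℝ} {s t c : ℝ}

lemma iIndepFun.measureReal_sum_ge_le_exp_mul_prod_mgf (h_indep : iIndepFun X μ)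
    (h_meas : ∀ i, AEMeasurable (X i) μ) (ht : 0 ≤ t)
    (h_int : ∀ i, Integrable (fun ω => exp (t * X i ω)) μ) (S : Finset ι) (ε : ℝ) :
    μ.real {ω | ε ≤ ∑ i ∈ S, X i ω} ≤ exp (-t * ε) * ∏ i ∈ S, mgf (X i) μ t := by
  have := h_indep.isProbabilityMeasure
  have h_int_sum : Integrable (fun ω => exp (t * (∑ i ∈ S, X i) ω)) μ := by
    have h_ae := fun i => (h_meas i).ae_eq_mk
    refine ((h_indep.congr h_ae).integrable_exp_mul_sum (fun i => (h_meas i).measurable_mk)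
      (s := S) fun i _ => (h_int i).congr ((h_ae i).fun_comp fun z => exp (t * z))).congr ?_
    filter_upwards [(Filter.eventually_all_finset S).2 fun i _ => h_ae i] with ω hω
    simp only [Finset.sum_apply, Finset.sum_congr rfl hω]
  simpa [h_indep.mgf_sum₀ h_meas] using measure_ge_le_exp_mul_mgf ε ht h_int_sum

lemma iIndepFun.measureReal_sum_indicator_Ioi_ge_le (h_indep : iIndepFun X μ)
    (h_meas : ∀ i, AEMeasurable (X i) μ) (h_int : ∀ i, Integrable (fun ω => exp (s * X i ω)) μ)
    (ht : 0 ≤ t) (hts : t ≤ s) (S : Finset ι) (ε : ℝ) :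
    μ.real {ω | ε ≤ ∑ i ∈ S, (Set.Ioi c).indicator id (X i ω)} ≤
      exp (-t * ε) * ∏ i ∈ S, (1 + exp (-(s - t) * c) * mgf (X i) μ s) := by
  have := h_indep.isProbabilityMeasure
  have h_meas_trunc : ∀ i, AEMeasurable ((Set.Ioi c).indicator id ∘ X i) μ := fun i =>
    (measurable_id.indicator measurableSet_Ioi).comp_aemeasurable (h_meas i)
  calc μ.real {ω | ε ≤ ∑ i ∈ S, (Set.Ioi c).indicator id (X i ω)}
      ≤ exp (-t * ε) * ∏ i ∈ S, mgf ((Set.Ioi c).indicator id ∘ X i) μ t :=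
        (h_indep.comp _ fun _ => measurable_id.indicator measurableSet_Ioi)
          |>.measureReal_sum_ge_le_exp_mul_prod_mgf h_meas_trunc ht
            (fun i => integrable_exp_mul_indicator_Ioi_comp (h_meas i) (h_int i) hts) S ε
    _ ≤ exp (-t * ε) * ∏ i ∈ S, (1 + exp (-(s - t) * c) * mgf (X i) μ s) := by
        gcongr with i
        · exact fun _ _ => mgf_nonneg
        · exact mgf_indicator_Ioi_comp_le (h_meas i) (h_int i) hts

end ProbabilityTheory

lemma one_add_pow_le_exp_mul {x : ℝ} (hx : 0 ≤ 1 + x) (n : ℕ) : (1 + x) ^ n ≤ exp (n * x) := by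
  rw [exp_nat_mul]
  exact pow_le_pow_left₀ hx (by linarith [add_one_le_exp x]) n

lemma one_add_inv_cube_mul_pow_sq_le_two {r : ℕ} (hr : 1 ≤ r) {M : ℝ} (hM : 0 ≤ M)
    (hMr : M ≤ r * log 2) : (1 + ((r : ℝ) ^ 3)⁻¹ * M) ^ (r ^ 2) ≤ 2 := by
  have hr' : (0 : ℝ) < r := by exact_mod_cast hr
  calc (1 + ((r : ℝ) ^ 3)⁻¹ * M) ^ (r ^ 2)
      ≤ exp (((r ^ 2 : ℕ) : ℝ) * (((r : ℝ) ^ 3)⁻¹ * M)) :=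
        one_add_pow_le_exp_mul (by positivity) _
    _ = exp (M / r) := by congr 1; push_cast; field_simp
    _ ≤ exp (log 2) := by gcongr; rwa [div_le_iff₀' hr']
    _ = 2 := exp_log two_pos

lemma exp_neg_sub_half_mul_six_div_mul_log {a : ℝ} (ha : a ≠ 0) {r : ℝ} (hr : 0 < r) :
    exp (-(a - a / 2) * (6 / a * log r)) = (r ^ 3)⁻¹ := by
  rw [show -(a - a / 2) * (6 / a * log r) = -((3 : ℕ) * log r) by field_simp; ring,
    exp_neg, ← log_pow, exp_log (by positivity)]

/-- truncation error bound. For i.i.d. nonnegative `Z₁,…,Z_N` (`N = r²`) with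
`𝔼 e^{aZ₁} < ∞`, `b = 6/a` and `r ≥ 𝔼 e^{aZ₁}/log 2`, for all `x > 0`,
`ℙ(∑ Z_l 1{Z_l > b log r} > x) ≤ 2 e^{-(a/2)x}`. -/
theorem truncation_tail_bound
    {Ω : Type*} [MeasurableSpace Ω] (P : Measure Ω) [IsProbabilityMeasure P]
    (r : ℕ) (hr : 1 ≤ r) (Z : Fin (r ^ 2) → Ω → ℝ)
    (hindep : iIndepFun Z P)
    (hid : ∀ l, Measure.map (Z l) P = Measure.map (Z ⟨0, by positivity⟩) P)
    (a : ℝ) (ha : 0 < a)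
    (hint : Integrable (fun ω => Real.exp (a * Z ⟨0, by positivity⟩ ω)) P)
    (hbig : (∫ ω, Real.exp (a * Z ⟨0, by positivity⟩ ω) ∂P) / Real.log 2 ≤ (r : ℝ)) :
    ∀ x : ℝ, 0 < x →
      (P {ω | x < ∑ l, Set.indicator {ω' | (6 / a) * Real.log r < Z l ω'} (Z l) ω}).toReal ≤
        2 * Real.exp (-(a / 2) * x) := by
  intro x _
  set i₀ : Fin (r ^ 2) := ⟨0, by positivity⟩
  have hident : ∀ l, IdentDistrib (Z l) (Z i₀) P P := fun l =>
    identDistrib_of_map_eq (aemeasurable_of_integrable_exp_mul ha.ne' hint) (hid l)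
  have hint_exp : ∀ l, Integrable (fun ω => exp (a * Z l ω)) P := fun l =>
    ((hident l).comp (by fun_prop : Measurable fun z => exp (a * z))).integrable_iff.2 hint
  have hchernoff := hindep.measureReal_sum_indicator_Ioi_ge_le (c := 6 / a * log r)
    (fun l => (hident l).aemeasurable_fst) hint_exp (by positivity) (half_le_self ha.le)
    Finset.univ x
  simp only [exp_neg_sub_half_mul_six_div_mul_log ha.ne' (by positivity : (0 : ℝ) < r),
    (hident _).mgf_eq, Finset.prod_const, Finset.card_univ, Fintype.card_fin] at hchernoff
  calc (P {ω | x < ∑ l, Set.indicator {ω' | 6 / a * log r < Z l ω'} (Z l) ω}).toReal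
      ≤ P.real {ω | x ≤ ∑ l, (Set.Ioi (6 / a * log r)).indicator id (Z l ω)} :=
        measureReal_mono <| Set.ofPred_subset_ofPred.2 fun _ => le_of_lt
    _ ≤ exp (-(a / 2) * x) * (1 + ((r : ℝ) ^ 3)⁻¹ * mgf (Z i₀) P a) ^ (r ^ 2) := hchernoff
    _ ≤ 2 * exp (-(a / 2) * x) := by
        rw [mul_comm]
        gcongr
        exact one_add_inv_cube_mul_pow_sq_le_two hr mgf_nonneg
          ((div_le_iff₀ (log_pos one_lt_two)).1 hbig)
end

section
/- Define $f(x,t) = \gamma \sqrt{xt}$ for $x, t > 0$ and a constant $\gamma > 0$. Fix $\theta \in (0, \pi/4)$ and $\delta \in (0, 1/2)$. There exist constants $c_0 > 0$ and $M > 0$ (depending on $\gamma, \theta, \delta$) such that for all $\mathbf{p} = (x,t)$ with $\min(x,t) > 0$, angle of $\mathbf{p}$ within $\theta$ of the diagonal direction $(1,1)/\sqrt{2}$, $|\mathbf{p}| \geq M$, and all $\mathbf{q} \geq \mathbf{p}$ with $|\mathbf{q}| \leq 2|\mathbf{p}|$ whose Euclidean distance to the line through $\mathbf{0}$ and $\mathbf{p}$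 equals $|\mathbf{p}|^{1-\delta}$, one has $f(\mathbf{q}) - f(\mathbf{q} - \mathbf{p}) - f(\mathbf{p}) \geq c_0 |\mathbf{p}|^{1 - 2\delta}$. -/
open Real

noncomputable section

/-- Euclidean norm on `ℝ²`. -/
def enorm2 (p : ℝ × ℝ) : ℝ := Real.sqrt (p.1 ^ 2 + p.2 ^ 2)

/-- Angle between two nonzero vectors of `ℝ²`. -/
def angle2 (u v : ℝ × ℝ) : ℝ :=
  Real.arccos ((u.1 * v.1 + u.2 * v.2) / (enorm2 u * enorm2 v))

/-- Euclidean distance from `q` to the line through `0` and `p`. -/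
def distToRay (p q : ℝ × ℝ) : ℝ := |q.1 * p.2 - q.2 * p.1| / enorm2 p

/-- The hyperbolic shape function `f(x,t) = γ √(xt)`. -/
def shapeFn (γ : ℝ) (p : ℝ × ℝ) : ℝ := γ * Real.sqrt (p.1 * p.2)

lemma fst_le_enorm2 (p : ℝ × ℝ) (h : 0 ≤ p.1) : p.1 ≤ enorm2 p := by
  have : p.1 = Real.sqrt (p.1 ^ 2) := (Real.sqrt_sq h).symm
  rw [this, enorm2]
  exact Real.sqrt_le_sqrt (by nlinarith [sq_nonneg p.2])

lemma snd_le_enorm2 (p : ℝ × ℝ) (h : 0 ≤ p.2) : p.2 ≤ enorm2 p := by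
  have : p.2 = Real.sqrt (p.2 ^ 2) := (Real.sqrt_sq h).symm
  rw [this, enorm2]
  exact Real.sqrt_le_sqrt (by nlinarith [sq_nonneg p.1])

lemma sum_sq_le_aux {u v n : ℝ} (hu : u ^ 2 ≤ 2 * n ^ 2) (hv : v ^ 2 ≤ 2 * n ^ 2) :
    (u + v) ^ 2 ≤ 8 * n ^ 2 := by nlinarith [sq_nonneg (u - v)]

lemma pos_factor_aux {a s : ℝ} (hs : 0 < s) (h : 0 < a * s) : 0 < a := by
  by_contra hc
  push_neg at hc
  nlinarith

set_option maxHeartbeats 1600000 in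
/-- curvature estimate for the shape function. For `p` in the cone of angle `θ`
around the diagonal with `|p| ≥ M`, and `q ≥ p` with `|q| ≤ 2|p|` at distance `|p|^{1-δ}`
from the ray through `p`, one has `f(q) - f(q-p) - f(p) ≥ c₀ |p|^{1-2δ}`. -/
theorem shape_curvature (γ θ δ : ℝ) (hγ : 0 < γ) (hθ : θ ∈ Set.Ioo 0 (π / 4))
    (hδ : δ ∈ Set.Ioo (0 : ℝ) (1 / 2)) :
    ∃ c₀ > (0 : ℝ), ∃ M > (0 : ℝ), ∀ p q : ℝ × ℝ,
      0 < p.1 → 0 < p.2 →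
      angle2 p (1, 1) ≤ θ →
      M ≤ enorm2 p →
      p ≤ q → enorm2 q ≤ 2 * enorm2 p →
      distToRay p q = enorm2 p ^ ((1 : ℝ) - δ) →
      c₀ * enorm2 p ^ ((1 : ℝ) - 2 * δ) ≤
        shapeFn γ q - shapeFn γ (q - p) - shapeFn γ p := by
  refine ⟨γ / 40, by positivity, 1, one_pos, ?_⟩
  intro p q hx ht _ hM hpq hq2 hdist
  obtain ⟨x, t⟩ := p
  obtain ⟨X, T⟩ := q
  simp only at hx ht hpq hq2 hdist ⊢
  set N := enorm2 (x, t) with hNdef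
  have hN0 : (0:ℝ) < N := lt_of_lt_of_le one_pos hM
  have hxX : x ≤ X := hpq.1
  have htT : t ≤ T := hpq.2
  have hX0 : 0 < X := lt_of_lt_of_le hx hxX
  have hT0 : 0 < T := lt_of_lt_of_le ht htT
  -- component bounds
  have hxN : x ≤ N := fst_le_enorm2 (x, t) hx.le
  have htN : t ≤ N := snd_le_enorm2 (x, t) ht.le
  have hXN : X ≤ 2 * N := le_trans (fst_le_enorm2 (X, T) hX0.le) hq2
  have hTN : T ≤ 2 * N := le_trans (snd_le_enorm2 (X, T) hT0.le) hq2
  -- the cross term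
  have hcross : |X * t - T * x| = N ^ ((2:ℝ) - δ) := by
    have h1 : |X * t - T * x| / N = N ^ ((1:ℝ) - δ) := by
      rw [← hdist]; rfl
    have h2 : |X * t - T * x| = N ^ ((1:ℝ) - δ) * N := by
      field_simp at h1
      linarith
    rw [h2]
    have h3 : N ^ ((1:ℝ) - δ) * N ^ (1:ℝ) = N ^ ((1:ℝ) - δ + 1) := (Real.rpow_add hN0 _ _).symm
    rw [Real.rpow_one] at h3
    rw [h3]
    congr 1
    ring
  -- abbreviations
  set A := Real.sqrt (X * T) with hAdef
  set B := Real.sqrt ((X - x) * (T - t)) with hBdef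
  set C := Real.sqrt (x * t) with hCdef
  set u := Real.sqrt (x * (T - t)) with hudef
  set v := Real.sqrt (t * (X - x)) with hvdef
  have hA0 : 0 ≤ A := Real.sqrt_nonneg _
  have hB0 : 0 ≤ B := Real.sqrt_nonneg _
  have hC0 : 0 ≤ C := Real.sqrt_nonneg _
  have hu0 : 0 ≤ u := Real.sqrt_nonneg _
  have hv0 : 0 ≤ v := Real.sqrt_nonneg _
  have hA2 : A ^ 2 = X * T := Real.sq_sqrt (by positivity)
  have hB2 : B ^ 2 = (X - x) * (T - t) :=
    Real.sq_sqrt (mul_nonneg (by linarith) (by linarith))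
  have hC2 : C ^ 2 = x * t := Real.sq_sqrt (by positivity)
  have hu2 : u ^ 2 = x * (T - t) := Real.sq_sqrt (mul_nonneg hx.le (by linarith))
  have hv2 : v ^ 2 = t * (X - x) := Real.sq_sqrt (mul_nonneg ht.le (by linarith))
  have hn1 : (0:ℝ) ≤ x * (T - t) := mul_nonneg hx.le (by linarith)
  have hn2 : (0:ℝ) ≤ (X - x) * (T - t) := mul_nonneg (by linarith) (by linarith)
  have huv : u * v = B * C := by
    have e1 : u * v = Real.sqrt ((x * (T - t)) * (t * (X - x))) :=
      (Real.sqrt_mul hn1 (t * (X - x))).symm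
    have e2 : B * C = Real.sqrt (((X - x) * (T - t)) * (x * t)) :=
      (Real.sqrt_mul hn2 (x * t)).symm
    rw [e1, e2]
    congr 1
    ring
  -- key algebraic identity
  have h1 : A ^ 2 - (B + C) ^ 2 = u ^ 2 + v ^ 2 - 2 * (u * v) := by
    rw [huv]; linear_combination hA2 - hB2 - hC2 - hu2 - hv2
  have h2 : (A - B - C) * ((A + B + C) * (u + v) ^ 2) = (u ^ 2 - v ^ 2) ^ 2 := by
    linear_combination ((u + v) ^ 2) * h1
  have h3 : u ^ 2 - v ^ 2 = x * T - t * X := by rw [hu2, hv2]; ring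
  have key : (A - B - C) * ((A + B + C) * (u + v) ^ 2) = (X * t - T * x) ^ 2 := by
    rw [h2, h3]; ring
  -- positivity of the right side
  have hP : (X * t - T * x) ^ 2 = N ^ ((4:ℝ) - 2 * δ) := by
    rw [← sq_abs, hcross, ← Real.rpow_natCast (N ^ ((2:ℝ) - δ)) 2,
      ← Real.rpow_mul hN0.le]
    congr 1
    push_cast
    ring
  have hPpos : 0 < (X * t - T * x) ^ 2 := by
    rw [hP]; exact Real.rpow_pos_of_pos hN0 _
  set S := (A + B + C) * (u + v) ^ 2 with hSdef
  have hS0 : 0 ≤ S := by positivity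
  have hSpos : 0 < S := by
    rcases hS0.lt_or_eq with h | h
    · exact h
    · exfalso; rw [← h, mul_zero] at key; rw [← key] at hPpos; exact lt_irrefl _ hPpos
  have hD : 0 < A - B - C := pos_factor_aux hSpos (key ▸ hPpos)
  -- denominator bound : S ≤ 40 N^3
  have hu2b : u ^ 2 ≤ 2 * N ^ 2 := by
    rw [hu2]
    calc x * (T - t) ≤ N * (2 * N) :=
          mul_le_mul hxN (by linarith) (by linarith) hN0.le
    _ = 2 * N ^ 2 := by ring
  have hv2b : v ^ 2 ≤ 2 * N ^ 2 := by
    rw [hv2]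
    calc t * (X - x) ≤ N * (2 * N) :=
          mul_le_mul htN (by linarith) (by linarith) hN0.le
    _ = 2 * N ^ 2 := by ring
  have hAb : A ≤ 2 * N := by
    rw [hAdef]
    calc Real.sqrt (X * T) ≤ Real.sqrt ((2 * N) ^ 2) := by
          apply Real.sqrt_le_sqrt
          calc X * T ≤ (2 * N) * (2 * N) := mul_le_mul hXN hTN hT0.le (by positivity)
          _ = (2 * N) ^ 2 := by ring
    _ = 2 * N := Real.sqrt_sq (by positivity)
  have hBb : B ≤ 2 * N := by
    rw [hBdef]
    calc Real.sqrt ((X - x) * (T - t)) ≤ Real.sqrt ((2 * N) ^ 2) := by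
          apply Real.sqrt_le_sqrt
          calc (X - x) * (T - t) ≤ (2 * N) * (2 * N) :=
                mul_le_mul (by linarith) (by linarith) (by linarith) (by positivity)
          _ = (2 * N) ^ 2 := by ring
    _ = 2 * N := Real.sqrt_sq (by positivity)
  have hCb : C ≤ N := by
    rw [hCdef]
    calc Real.sqrt (x * t) ≤ Real.sqrt (N ^ 2) := by
          apply Real.sqrt_le_sqrt
          calc x * t ≤ N * N := mul_le_mul hxN htN ht.le hN0.le
          _ = N ^ 2 := by ring
    _ = N := Real.sqrt_sq hN0.le
  have huvb : (u + v) ^ 2 ≤ 8 * N ^ 2 := sum_sq_le_aux hu2b hv2b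
  have hSb : S ≤ 40 * N ^ 3 := by
    calc S ≤ (5 * N) * (8 * N ^ 2) :=
          mul_le_mul (by linarith) huvb (sq_nonneg _) (by positivity)
    _ = 40 * N ^ 3 := by ring
  -- conclude
  have hprod : N ^ ((4:ℝ) - 2 * δ) ≤ (A - B - C) * (40 * N ^ 3) := by
    rw [← hP, ← key]
    exact mul_le_mul_of_nonneg_left hSb hD.le
  have hsplit : N ^ ((4:ℝ) - 2 * δ) = N ^ ((1:ℝ) - 2 * δ) * N ^ 3 := by
    rw [← Real.rpow_natCast N 3, ← Real.rpow_add hN0]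
    congr 1
    push_cast
    ring
  have hfinal : N ^ ((1:ℝ) - 2 * δ) ≤ 40 * (A - B - C) := by
    have h3pos : (0:ℝ) < N ^ 3 := by positivity
    rw [hsplit] at hprod
    have hmm : N ^ ((1:ℝ) - 2 * δ) * N ^ 3 ≤ (40 * (A - B - C)) * N ^ 3 := by
      calc N ^ ((1:ℝ) - 2 * δ) * N ^ 3 ≤ (A - B - C) * (40 * N ^ 3) := hprod
      _ = (40 * (A - B - C)) * N ^ 3 := by ring
    exact le_of_mul_le_mul_right hmm h3pos
  -- unfold the goal
  have hgoal : shapeFn γ (X, T) - shapeFn γ ((X, T) - (x, t)) - shapeFn γ (x, t)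
      = γ * A - γ * B - γ * C := by
    simp only [shapeFn, hAdef, hBdef, hCdef, Prod.mk_sub_mk]
  rw [hgoal]
  calc γ / 40 * N ^ ((1:ℝ) - 2 * δ) ≤ γ / 40 * (40 * (A - B - C)) :=
        mul_le_mul_of_nonneg_left hfinal (by positivity)
  _ = γ * A - γ * B - γ * C := by ring
end
end

section
/- Suppose a function $g: [1,\infty) \to \mathbb{R}$ satisfies: (i) $g(r)/r \to \gamma$ as $r \to \infty$, (ii) $g(r) \leq \gamma r$ for all $r$, and (iii) there exists $b > 0$ such that $g(2r) - b\, r^{1/2} \log^2 r \leq 2 g(r)$ for all $r \geq 1$. Then there exists a constant $c_0 > 0$ such that $g(r) \geq \gamma r - c_0 r^{1/2} \log^2 r$ for all $r \geq 2$. -/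
/-!
For the defect `h r = γ * r - g r`, hypothesis (iii) reads `2 h(r) ≤ h(2r) + b √r log² r`.
Iterating along `r, 2r, 4r, …` gives
`h(r) ≤ ∑_{k<n} b √(2ᵏr) log²(2ᵏr) / 2ᵏ⁺¹ + h(2ⁿr) / 2ⁿ`, where the last term tends to `0` by (i).
For `r ≥ 2` one has `log (2ᵏr) ≤ (k+1) log r`, so the `k`-th error term is at most
`(b/2) √r log² r · (k+1)² 2^(-k/2)`, and these form a convergent series.
-/

open Filter Real Topology

section DyadicIteration

variable {f e : ℝ → ℝ}

theorem le_sum_range_add_div_pow_of_two_mul_le (hf : ∀ r ≥ 1, 2 * f r ≤ f (2 * r) + e r)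
    {r : ℝ} (hr : 1 ≤ r) (n : ℕ) :
    f r ≤ ∑ k ∈ Finset.range n, e (2 ^ k * r) / 2 ^ (k + 1) + f (2 ^ n * r) / 2 ^ n := by
  induction n with
  | zero => simp
  | succ n ih =>
    have hstep := hf (2 ^ n * r) (one_le_mul_of_one_le_of_one_le (one_le_pow₀ one_le_two) hr)
    rw [← mul_assoc, ← pow_succ'] at hstep
    have hhalve : f (2 ^ n * r) / 2 ^ n ≤
        e (2 ^ n * r) / 2 ^ (n + 1) + f (2 ^ (n + 1) * r) / 2 ^ (n + 1) :=
      calc f (2 ^ n * r) / 2 ^ n = 2 * f (2 ^ n * r) / 2 ^ (n + 1) := by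
            rw [pow_succ]; field_simp
        _ ≤ (f (2 ^ (n + 1) * r) + e (2 ^ n * r)) / 2 ^ (n + 1) := by gcongr
        _ = _ := by ring
    rw [Finset.sum_range_succ]
    linarith

theorem le_tsum_of_two_mul_le (hf : ∀ r ≥ 1, 2 * f r ≤ f (2 * r) + e r) {r : ℝ} (hr : 1 ≤ r)
    (hlim : Tendsto (fun n : ℕ => f (2 ^ n * r) / 2 ^ n) atTop (𝓝 0))
    {u : ℕ → ℝ} (hu : Summable u) (hu0 : ∀ k, 0 ≤ u k)
    (heu : ∀ k, e (2 ^ k * r) / 2 ^ (k + 1) ≤ u k) :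
    f r ≤ ∑' k, u k := by
  refine ge_of_tendsto' (by simpa using hlim.const_add (∑' k, u k)) fun n => ?_
  calc f r ≤ ∑ k ∈ Finset.range n, e (2 ^ k * r) / 2 ^ (k + 1) + f (2 ^ n * r) / 2 ^ n :=
        le_sum_range_add_div_pow_of_two_mul_le hf hr n
    _ ≤ ∑ k ∈ Finset.range n, u k + f (2 ^ n * r) / 2 ^ n := by
        gcongr with k; exact heu k
    _ ≤ ∑' k, u k + f (2 ^ n * r) / 2 ^ n := by
        gcongr; exact hu.sum_le_tsum _ fun k _ => hu0 k

end DyadicIteration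

theorem tendsto_sub_div_pow_two_of_tendsto_div {g : ℝ → ℝ} {γ : ℝ}
    (hg : Tendsto (fun r => g r / r) atTop (𝓝 γ)) {r : ℝ} (hr : 0 < r) :
    Tendsto (fun n : ℕ => (γ * (2 ^ n * r) - g (2 ^ n * r)) / 2 ^ n) atTop (𝓝 0) := by
  have hscale : Tendsto (fun n : ℕ => (2 : ℝ) ^ n * r) atTop atTop :=
    (tendsto_pow_atTop_atTop_of_one_lt one_lt_two).atTop_mul_const hr
  have hlim := ((hg.comp hscale).const_sub γ).const_mul r
  rw [sub_self, mul_zero] at hlim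
  refine hlim.congr fun n => ?_
  have h2n : (0 : ℝ) < 2 ^ n := by positivity
  simp only [Function.comp_apply]
  field_simp

theorem log_two_pow_mul_le {r : ℝ} (hr : 2 ≤ r) (k : ℕ) : log (2 ^ k * r) ≤ (k + 1) * log r := by
  have hlog2 : log 2 ≤ log r := log_le_log two_pos hr
  have hlogr : 0 ≤ log r := log_nonneg (by linarith)
  rw [log_mul (by positivity) (by positivity), log_pow]
  nlinarith [(k.cast_nonneg : (0 : ℝ) ≤ k)]

theorem sqrt_mul_log_sq_two_pow_mul_div_le {r : ℝ} (hr : 2 ≤ r) (k : ℕ) :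
    √(2 ^ k * r) * log (2 ^ k * r) ^ 2 / 2 ^ (k + 1) ≤
      (k + 1) ^ 2 * (√2)⁻¹ ^ k * (√r * log r ^ 2) / 2 := by
  have hlog : log (2 ^ k * r) ^ 2 ≤ ((k + 1) * log r) ^ 2 :=
    pow_le_pow_left₀ (log_nonneg (by nlinarith [one_le_pow₀ (M₀ := ℝ) one_le_two (n := k)]))
      (log_two_pow_mul_le hr k) 2
  have h2 : (2 : ℝ) ^ k = √2 ^ k * √2 ^ k := by rw [← mul_pow, mul_self_sqrt zero_le_two]
  have hsqrt : √(2 ^ k * r) = √2 ^ k * √r := by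
    rw [sqrt_mul (by positivity), h2, sqrt_mul_self (by positivity)]
  calc √(2 ^ k * r) * log (2 ^ k * r) ^ 2 / 2 ^ (k + 1)
      ≤ √(2 ^ k * r) * ((k + 1) * log r) ^ 2 / 2 ^ (k + 1) := by gcongr
    _ = (k + 1) ^ 2 * (√2)⁻¹ ^ k * (√r * log r ^ 2) / 2 := by
      rw [hsqrt, pow_succ (2 : ℝ) k, h2, inv_pow]
      field_simp

theorem summable_succ_sq_mul_geometric {x : ℝ} (hx : ‖x‖ < 1) :
    Summable fun k : ℕ => ((k : ℝ) + 1) ^ 2 * x ^ k := by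
  have h2 := summable_pow_mul_geometric_of_norm_lt_one 2 hx
  have h1 := summable_pow_mul_geometric_of_norm_lt_one 1 hx
  have h0 := summable_geometric_of_norm_lt_one hx
  refine (h2.add ((h1.mul_left 2).add h0)).congr fun k => ?_
  ring

theorem howard_newman_iteration_general (g : ℝ → ℝ) (γ b : ℝ) (hb : 0 < b)
    (h1 : Tendsto (fun r => g r / r) atTop (nhds γ))
    (h3 : ∀ r ≥ (1 : ℝ), g (2 * r) - b * Real.sqrt r * (Real.log r) ^ 2 ≤ 2 * g r) :
    ∃ c₀ > (0 : ℝ), ∀ r ≥ (2 : ℝ),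
      γ * r - c₀ * Real.sqrt r * (Real.log r) ^ 2 ≤ g r := by
  have hx : ‖(√2)⁻¹‖ < 1 := by
    rw [norm_inv, norm_of_nonneg (sqrt_nonneg 2)]
    exact inv_lt_one_of_one_lt₀ (lt_sqrt_of_sq_lt (by norm_num))
  set S := ∑' k : ℕ, ((k : ℝ) + 1) ^ 2 * (√2)⁻¹ ^ k
  refine ⟨b / 2 * S + 1, by positivity, fun r hr => ?_⟩
  have hdefect : ∀ s ≥ (1 : ℝ), 2 * (γ * s - g s) ≤
      (γ * (2 * s) - g (2 * s)) + b * (√s * log s ^ 2) := fun s hs => by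
    linarith [h3 s hs]
  have hbound := le_tsum_of_two_mul_le hdefect (by linarith)
    (tendsto_sub_div_pow_two_of_tendsto_div h1 (by linarith))
    ((summable_succ_sq_mul_geometric hx).mul_left (b * (√r * log r ^ 2) / 2))
    (fun k => by positivity) fun k => by
      rw [mul_div_assoc]
      calc _ ≤ b * ((k + 1) ^ 2 * (√2)⁻¹ ^ k * (√r * log r ^ 2) / 2) :=
            mul_le_mul_of_nonneg_left (sqrt_mul_log_sq_two_pow_mul_div_le hr k) hb.le
        _ = _ := by ring
  rw [tsum_mul_left] at hbound
  linarith [mul_nonneg (sqrt_nonneg r) (sq_nonneg (log r))]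

/-- Howard–Newman iteration lemma. If `g(r)/r → γ`, `g(r) ≤ γ r`, and
`g(2r) - b √r log² r ≤ 2 g(r)` for `r ≥ 1`, then `g(r) ≥ γ r - c₀ √r log² r` for `r ≥ 2`. -/
theorem howard_newman_iteration (g : ℝ → ℝ) (γ b : ℝ) (hb : 0 < b)
    (h1 : Tendsto (fun r => g r / r) atTop (nhds γ))
    (h2 : ∀ r ≥ (1 : ℝ), g r ≤ γ * r)
    (h3 : ∀ r ≥ (1 : ℝ), g (2 * r) - b * Real.sqrt r * (Real.log r) ^ 2 ≤ 2 * g r) :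
    ∃ c₀ > (0 : ℝ), ∀ r ≥ (2 : ℝ),
      γ * r - c₀ * Real.sqrt r * (Real.log r) ^ 2 ≤ g r :=
  howard_newman_iteration_general g γ b hb h1 h3
end
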